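/- Let K be a commutative ring, A a separable K-algebra, and i : A → B a homomorphism of K-algebras. Then i is a pure morphism of left A-modules if and only if it is a pure morphism of right A-modules. -/

import Mathlib

open scoped TensorProduct
open MulOpposite

/-- The subgroup of `L ⊗[ℤ] M` by which one quotients to obtain the tensor product
`L ⊗[A] M` of a right `A`-module `L` and a left `A`-module `M` over a
(not necessarily commutative) ring `A`. -/
noncomputable def NCrel (A : Type) [Ring A] (L M : Type) [AddCommGroup L]
    [AddCommGroup M] [Module Aᵐᵒᵖ L] [Module A M] : AddSubgroup (L ⊗[ℤ] M) :=
  AddSubgroup.closure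
    {x | ∃ (l : L) (a : A) (m : M), x = (op a • l) ⊗ₜ[ℤ] m - l ⊗ₜ[ℤ] (a • m)}

/-- The tensor product `L ⊗[A] M` over a (not necessarily commutative) ring `A` of a
right `A`-module `L` and a left `A`-module `M`, as an abelian group. -/
abbrev NCT (A : Type) [Ring A] (L M : Type) [AddCommGroup L] [AddCommGroup M]
    [Module Aᵐᵒᵖ L] [Module A M] : Type :=
  (L ⊗[ℤ] M) ⧸ NCrel A L M

/-- The elementary tensor `l ⊗ m` in `L ⊗[A] M`. -/
noncomputable def NCT.tmul (A : Type) [Ring A] {L M : Type} [AddCommGroup L]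
    [AddCommGroup M] [Module Aᵐᵒᵖ L] [Module A M] (l : L) (m : M) : NCT A L M :=
  QuotientAddGroup.mk (l ⊗ₜ[ℤ] m)

/-- The map `L ⊗[A] f : L ⊗[A] M → L ⊗[A] N` induced by a morphism `f : M → N` of left
`A`-modules. -/
noncomputable def NCT.mapRight (A : Type) [Ring A] (L : Type) [AddCommGroup L]
    [Module Aᵐᵒᵖ L] {M N : Type} [AddCommGroup M] [AddCommGroup N] [Module A M]
    [Module A N] (f : M →+ N) (hf : ∀ (a : A) (m : M), f (a • m) = a • f m) :
    NCT A L M →+ NCT A L N :=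
  QuotientAddGroup.map _ _
    (TensorProduct.map LinearMap.id f.toIntLinearMap).toAddMonoidHom
    (by
      refine (AddSubgroup.closure_le _).mpr ?_
      rintro x ⟨l, a, m, rfl⟩
      simp only [SetLike.mem_coe, AddSubgroup.mem_comap, map_sub,
        LinearMap.toAddMonoidHom_coe, TensorProduct.map_tmul, LinearMap.id_coe, id_eq,
        AddMonoidHom.coe_toIntLinearMap]
      exact AddSubgroup.subset_closure ⟨l, a, f m, by rw [hf]⟩)

/-- The map `f ⊗[A] M : L ⊗[A] M → L' ⊗[A] M` induced by a morphism `f : L → L'` of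
right `A`-modules. -/
noncomputable def NCT.mapLeft (A : Type) [Ring A] {L L' : Type} [AddCommGroup L]
    [AddCommGroup L'] [Module Aᵐᵒᵖ L] [Module Aᵐᵒᵖ L'] (M : Type) [AddCommGroup M]
    [Module A M] (f : L →+ L') (hf : ∀ (a : Aᵐᵒᵖ) (l : L), f (a • l) = a • f l) :
    NCT A L M →+ NCT A L' M :=
  QuotientAddGroup.map _ _
    (TensorProduct.map f.toIntLinearMap LinearMap.id).toAddMonoidHom
    (by
      refine (AddSubgroup.closure_le _).mpr ?_
      rintro x ⟨l, a, m, rfl⟩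
      simp only [SetLike.mem_coe, AddSubgroup.mem_comap, map_sub,
        LinearMap.toAddMonoidHom_coe, TensorProduct.map_tmul, LinearMap.id_coe, id_eq,
        AddMonoidHom.coe_toIntLinearMap]
      exact AddSubgroup.subset_closure ⟨f l, a, m, by rw [hf]⟩)

/-- `i : A → B` is a pure morphism of left `A`-modules: for every right `A`-module `L`,
the map `L ⊗[A] i : L ⊗[A] A → L ⊗[A] B` is injective.  Here `B` is a left `A`-module
via `i`. -/
noncomputable def RingHom.LeftPure {A B : Type} [Ring A] [Ring B] (i : A →+* B) :
    Prop :=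
  ∀ (L : Type) (_ : AddCommGroup L) (_ : Module Aᵐᵒᵖ L),
    letI : Module A B := Module.compHom B i
    Function.Injective
      (NCT.mapRight A L (M := A) (N := B) i.toAddMonoidHom
        (fun a m => show i (a * m) = i a * i m from map_mul i a m))

/-- `i : A → B` is a pure morphism of right `A`-modules: for every left `A`-module `L`,
the map `i ⊗[A] L : A ⊗[A] L → B ⊗[A] L` is injective.  Here `B` is a right `A`-module
via `i`. -/
noncomputable def RingHom.RightPure {A B : Type} [Ring A] [Ring B] (i : A →+* B) :
    Prop :=
  ∀ (L : Type) (_ : AddCommGroup L) (_ : Module A L),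
    letI : Module Aᵐᵒᵖ B := Module.compHom B (RingHom.op i)
    Function.Injective
      (NCT.mapLeft A (L := A) (L' := B) L i.toAddMonoidHom
        (fun a l => show i (l * a.unop) = i l * i a.unop from map_mul i l a.unop))


/-- A `K`-algebra `A` is separable if the multiplication map `A ⊗[K] A → A` admits an
`(A,A)`-bimodule section, equivalently if there is a separability idempotent
`e ∈ A ⊗[K] A` with `(mul) e = 1` and `(a ⊗ 1) * e = e * (1 ⊗ a)` for all `a`
(equivalently, `A` is projective as an `(A,A)`-bimodule). -/
def IsSeparableAlgebra (K A : Type) [CommRing K] [Ring A] [Algebra K A] : Prop :=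
  ∃ e : A ⊗[K] A, LinearMap.mul' K A e = 1 ∧
    ∀ a : A, (a ⊗ₜ[K] (1 : A)) * e = e * ((1 : A) ⊗ₜ[K] a)

/-!
Both conditions are equivalent to `i` being a pure morphism of `K`-modules, i.e. to
`i ⊗[K] M` being injective for every `K`-module `M`. One direction needs no separability: for
the right `A`-module `A ⊗[K] M` the map `(A ⊗[K] M) ⊗[A] i` is `i ⊗[K] M` up to the
isomorphisms `(A ⊗[K] M) ⊗[A] P ≃ P ⊗[K] M`, and symmetrically on the other side.
Conversely, a separability idempotent `e = ∑ xⱼ ⊗ yⱼ` makes `L ⊗[A] N` a retract of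
`L ⊗[K] N`, naturally in both variables, through `l ⊗ n ↦ ∑ l xⱼ ⊗ yⱼ n`: this is balanced
because `(a ⊗ 1) e = e (1 ⊗ a)`, and a section of `L ⊗[K] N → L ⊗[A] N` because `∑ xⱼ yⱼ = 1`.
So `L ⊗[A] i` and `i ⊗[A] N` inherit injectivity from `L ⊗[K] i` and `i ⊗[K] N`.
-/

open Function TensorProduct

def AddMonoidHom.mk₂ {M N P : Type*} [AddZeroClass M] [AddZeroClass N] [AddCommGroup P]
    (f : M → N → P) (h₁ : ∀ m m' n, f (m + m') n = f m n + f m' n)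
    (h₂ : ∀ m n n', f m (n + n') = f m n + f m n') : M →+ N →+ P :=
  AddMonoidHom.mk' (fun m => AddMonoidHom.mk' (f m) (h₂ m)) fun m m' =>
    AddMonoidHom.ext (h₁ m m')

@[simp]
theorem AddMonoidHom.mk₂_apply {M N P : Type*} [AddZeroClass M] [AddZeroClass N]
    [AddCommGroup P] (f : M → N → P) (h₁) (h₂) (m : M) (n : N) :
    AddMonoidHom.mk₂ f h₁ h₂ m n = f m n :=
  rfl

def LinearMap.IsPure {R M N : Type*} [CommRing R] [AddCommGroup M] [AddCommGroup N]
    [Module R M] [Module R N] (f : M →ₗ[R] N) : Prop :=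
  ∀ (P : Type) [AddCommGroup P] [Module R P], Injective (f.rTensor P)

theorem LinearMap.IsPure.lTensor_injective {R M N : Type*} [CommRing R] [AddCommGroup M]
    [AddCommGroup N] [Module R M] [Module R N] {f : M →ₗ[R] N} (hf : f.IsPure) (P : Type)
    [AddCommGroup P] [Module R P] : Injective (f.lTensor P) := by
  rw [← comm_comp_rTensor_comp_comm_eq]
  simpa using hf P

noncomputable section

namespace NCT

variable {A : Type} [Ring A] {L M T : Type} [AddCommGroup L] [AddCommGroup M] [AddCommGroup T]
  [Module Aᵐᵒᵖ L] [Module A M]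

theorem tmul_add_left (l l' : L) (m : M) :
    tmul A (l + l') m = tmul A l m + tmul A l' m := by
  rw [tmul, TensorProduct.add_tmul]
  rfl

theorem tmul_add_right (l : L) (m m' : M) :
    tmul A l (m + m') = tmul A l m + tmul A l m' := by
  rw [tmul, TensorProduct.tmul_add]
  rfl

@[simp]
theorem zero_tmul (m : M) : tmul A (0 : L) m = 0 := by
  rw [tmul, TensorProduct.zero_tmul]
  rfl

@[simp]
theorem tmul_zero (l : L) : tmul A l (0 : M) = 0 := by
  rw [tmul, TensorProduct.tmul_zero]
  rfl

theorem op_smul_tmul (a : A) (l : L) (m : M) :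
    tmul A (op a • l) m = tmul A l (a • m) :=
  QuotientAddGroup.eq_iff_sub_mem.mpr (AddSubgroup.subset_closure ⟨l, a, m, rfl⟩)

@[elab_as_elim]
theorem induction_on {P : NCT A L M → Prop} (z : NCT A L M) (zero : P 0)
    (tmul : ∀ l m, P (tmul A l m)) (add : ∀ x y, P x → P y → P (x + y)) : P z :=
  QuotientAddGroup.induction_on z fun t =>
    TensorProduct.induction_on t zero tmul fun _ _ => add _ _

theorem addMonoidHom_ext {f g : NCT A L M →+ T}
    (h : ∀ l m, f (tmul A l m) = g (tmul A l m)) : f = g :=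
  AddMonoidHom.ext fun z =>
    induction_on z (by simp only [map_zero]) h fun x y hx hy => by simp only [map_add, hx, hy]

def lift (f : L → M → T) (h₁ : ∀ l l' m, f (l + l') m = f l m + f l' m)
    (h₂ : ∀ l m m', f l (m + m') = f l m + f l m')
    (hbal : ∀ (a : A) l m, f (op a • l) m = f l (a • m)) : NCT A L M →+ T :=
  QuotientAddGroup.lift _
    (liftAddHom (AddMonoidHom.mk₂ f h₁ h₂) fun n l m => by rw [map_zsmul, map_zsmul]; rfl) <|
    (AddSubgroup.closure_le _).mpr <| by
      rintro x ⟨l, a, m, rfl⟩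
      simp [hbal]

@[simp]
theorem lift_tmul (f : L → M → T) (h₁) (h₂) (hbal) (l : L) (m : M) :
    lift (A := A) f h₁ h₂ hbal (tmul A l m) = f l m :=
  rfl

end NCT

section Orbit

variable (K : Type) {A L M : Type} [CommRing K] [Ring A] [Algebra K A]
  [AddCommGroup L] [AddCommGroup M] [Module Aᵐᵒᵖ L] [Module A M]
  [Module K L] [Module K M] [IsScalarTower K Aᵐᵒᵖ L] [IsScalarTower K A M]

def orbitMap (m : M) : A →ₗ[K] M :=
  LinearMap.id.smulRight m

def opOrbitMap (l : L) : A →ₗ[K] L :=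
  (opLinearEquiv K).toLinearMap.smulRight l

variable {K}

@[simp]
theorem orbitMap_apply (m : M) (a : A) : orbitMap K m a = a • m :=
  rfl

@[simp]
theorem opOrbitMap_apply (l : L) (a : A) : opOrbitMap K l a = op a • l :=
  rfl

theorem orbitMap_add (m m' : M) :
    (orbitMap K (m + m') : A →ₗ[K] M) = orbitMap K m + orbitMap K m' :=
  LinearMap.ext fun _ => smul_add _ _ _

theorem opOrbitMap_add (l l' : L) :
    (opOrbitMap K (l + l') : A →ₗ[K] L) = opOrbitMap K l + opOrbitMap K l' :=
  LinearMap.ext fun _ => smul_add _ _ _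

theorem orbitMap_smul (a : A) (m : M) :
    orbitMap K (a • m) = orbitMap K m ∘ₗ LinearMap.mulRight K a :=
  LinearMap.ext fun _ => (mul_smul _ _ _).symm

theorem opOrbitMap_op_smul (a : A) (l : L) :
    opOrbitMap K (op a • l) = opOrbitMap K l ∘ₗ LinearMap.mulLeft K a :=
  LinearMap.ext fun _ => by simp [op_mul, mul_smul]

end Orbit

section Algebra

variable {K A : Type} [CommRing K] [Ring A] [Algebra K A]

theorem map_comp_mulLeft_apply {L M : Type*} [AddCommGroup L] [AddCommGroup M] [Module K L]
    [Module K M] (f : A →ₗ[K] L) (g : A →ₗ[K] M) (a : A) (t : A ⊗[K] A) :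
    map (f ∘ₗ LinearMap.mulLeft K a) g t = map f g ((a ⊗ₜ[K] 1) * t) := by
  induction t using TensorProduct.induction_on with
  | zero => simp
  | tmul x y => simp [Algebra.TensorProduct.tmul_mul_tmul]
  | add x y hx hy => simp only [map_add, mul_add, hx, hy]

theorem map_comp_mulRight_apply {L M : Type*} [AddCommGroup L] [AddCommGroup M] [Module K L]
    [Module K M] (f : A →ₗ[K] L) (g : A →ₗ[K] M) (a : A) (t : A ⊗[K] A) :
    map f (g ∘ₗ LinearMap.mulRight K a) t = map f g (t * (1 ⊗ₜ[K] a)) := by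
  induction t using TensorProduct.induction_on with
  | zero => simp
  | tmul x y => simp [Algebra.TensorProduct.tmul_mul_tmul]
  | add x y hx hy => simp only [map_add, add_mul, hx, hy]

variable {L M : Type} [AddCommGroup L] [AddCommGroup M] [Module Aᵐᵒᵖ L] [Module A M]
  [Module K L] [Module K M] [IsScalarTower K Aᵐᵒᵖ L] [IsScalarTower K A M]

namespace NCT

theorem smul_tmul (k : K) (l : L) (m : M) : tmul A (k • l) m = tmul A l (k • m) := by
  rw [← algebraMap_smul Aᵐᵒᵖ k l, ← algebraMap_smul A k m, MulOpposite.algebraMap_apply,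
    op_smul_tmul]

variable (K) in
def ofTensor : L ⊗[K] M →+ NCT A L M :=
  liftAddHom (AddMonoidHom.mk₂ (tmul A) tmul_add_left tmul_add_right) smul_tmul

@[simp]
theorem ofTensor_tmul (l : L) (m : M) : ofTensor K (l ⊗ₜ[K] m) = tmul A l m :=
  liftAddHom_tmul _ _ _ _

end NCT

theorem comp_opOrbitMap {L' : Type} [AddCommGroup L'] [Module Aᵐᵒᵖ L'] [Module K L']
    [IsScalarTower K Aᵐᵒᵖ L'] (f : L →ₗ[K] L') (hf : ∀ (a : Aᵐᵒᵖ) (l : L), f (a • l) = a • f l)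
    (l : L) : f ∘ₗ opOrbitMap K l = (opOrbitMap K (f l) : A →ₗ[K] L') :=
  LinearMap.ext fun a => hf (op a) l

theorem comp_orbitMap {M' : Type} [AddCommGroup M'] [Module A M'] [Module K M']
    [IsScalarTower K A M'] (g : M →ₗ[K] M') (hg : ∀ (a : A) (m : M), g (a • m) = a • g m)
    (m : M) : g ∘ₗ orbitMap K m = (orbitMap K (g m) : A →ₗ[K] M') :=
  LinearMap.ext fun a => hg a m

section SeparabilityIdempotent

variable (e : A ⊗[K] A) (he : ∀ a : A, (a ⊗ₜ[K] (1 : A)) * e = e * ((1 : A) ⊗ₜ[K] a))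

namespace NCT

def sepSection : NCT A L M →+ L ⊗[K] M :=
  lift (fun l m => map (opOrbitMap K l) (orbitMap K m) e)
    (fun l l' m => by rw [opOrbitMap_add, map_add_left, LinearMap.add_apply])
    (fun l m m' => by rw [orbitMap_add, map_add_right, LinearMap.add_apply])
    (fun a l m => by
      rw [opOrbitMap_op_smul, map_comp_mulLeft_apply, he, ← map_comp_mulRight_apply,
        ← orbitMap_smul])

theorem sepSection_tmul (l : L) (m : M) :
    sepSection e he (tmul A l m) = map (opOrbitMap K l) (orbitMap K m) e :=
  rfl

theorem ofTensor_map_orbitMap (l : L) (m : M) (t : A ⊗[K] A) :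
    ofTensor K (map (opOrbitMap K l) (orbitMap K m) t) = tmul A l (LinearMap.mul' K A t • m) := by
  induction t using TensorProduct.induction_on with
  | zero => simp
  | tmul x y => simp [op_smul_tmul, mul_smul]
  | add x y hx hy => simp only [map_add, add_smul, tmul_add_right, hx, hy]

theorem leftInverse_ofTensor_sepSection (he₁ : LinearMap.mul' K A e = 1) :
    LeftInverse (ofTensor K) (sepSection e he : NCT A L M →+ L ⊗[K] M) := fun z => by
  induction z using induction_on with
  | zero => simp
  | tmul l m => rw [sepSection_tmul, ofTensor_map_orbitMap, he₁, one_smul]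
  | add x y hx hy => simp only [map_add, hx, hy]

theorem sepSection_mapLeft {L' : Type} [AddCommGroup L'] [Module Aᵐᵒᵖ L'] [Module K L']
    [IsScalarTower K Aᵐᵒᵖ L'] (f : L →ₗ[K] L') (hf : ∀ (a : Aᵐᵒᵖ) (l : L), f (a • l) = a • f l)
    (z : NCT A L M) :
    sepSection e he (mapLeft A M f.toAddMonoidHom hf z) = f.rTensor M (sepSection e he z) := by
  induction z using induction_on with
  | zero => simp
  | tmul l m =>
    change map (opOrbitMap K (f l)) (orbitMap K m) e =
      f.rTensor M (map (opOrbitMap K l) (orbitMap K m) e)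
    rw [LinearMap.rTensor_map, comp_opOrbitMap f hf]
  | add x y hx hy => simp only [map_add, hx, hy]

theorem sepSection_mapRight {M' : Type} [AddCommGroup M'] [Module A M'] [Module K M']
    [IsScalarTower K A M'] (g : M →ₗ[K] M') (hg : ∀ (a : A) (m : M), g (a • m) = a • g m)
    (z : NCT A L M) :
    sepSection e he (mapRight A L g.toAddMonoidHom hg z) = g.lTensor L (sepSection e he z) := by
  induction z using induction_on with
  | zero => simp
  | tmul l m =>
    change map (opOrbitMap K l) (orbitMap K (g m)) e =
      g.lTensor L (map (opOrbitMap K l) (orbitMap K m) e)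
    rw [LinearMap.lTensor_map, comp_orbitMap g hg]
  | add x y hx hy => simp only [map_add, hx, hy]

end NCT

end SeparabilityIdempotent

namespace NCT

theorem mapLeft_injective_of_isSeparable (hA : IsSeparableAlgebra K A) {L' : Type}
    [AddCommGroup L'] [Module Aᵐᵒᵖ L'] [Module K L'] [IsScalarTower K Aᵐᵒᵖ L'] (f : L →ₗ[K] L')
    (hf : ∀ (a : Aᵐᵒᵖ) (l : L), f (a • l) = a • f l) (hinj : Injective (f.rTensor M)) :
    Injective (mapLeft A M f.toAddMonoidHom hf) := by
  obtain ⟨e, he₁, he⟩ := hA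
  have hnat : sepSection e he ∘ mapLeft A M f.toAddMonoidHom hf = f.rTensor M ∘ sepSection e he :=
    funext (sepSection_mapLeft e he f hf)
  refine Injective.of_comp (f := sepSection e he) ?_
  rw [hnat]
  exact hinj.comp (leftInverse_ofTensor_sepSection e he he₁).injective

theorem mapRight_injective_of_isSeparable (hA : IsSeparableAlgebra K A) {M' : Type}
    [AddCommGroup M'] [Module A M'] [Module K M'] [IsScalarTower K A M'] (g : M →ₗ[K] M')
    (hg : ∀ (a : A) (m : M), g (a • m) = a • g m) (hinj : Injective (g.lTensor L)) :
    Injective (mapRight A L g.toAddMonoidHom hg) := by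
  obtain ⟨e, he₁, he⟩ := hA
  have hnat : sepSection e he ∘ mapRight A L g.toAddMonoidHom hg = g.lTensor L ∘ sepSection e he :=
    funext (sepSection_mapRight e he g hg)
  refine Injective.of_comp (f := sepSection e he) ?_
  rw [hnat]
  exact hinj.comp (leftInverse_ofTensor_sepSection e he he₁).injective

end NCT

end Algebra

section CancelBaseChange

variable (K A : Type) [CommRing K] [Ring A] [Algebra K A] (M : Type) [AddCommGroup M]
  [Module K M]

theorem op_smul_eq_rTensor_mulRight (a : A) (x : A ⊗[K] M) :
    op a • x = (LinearMap.mulRight K a).rTensor M x := by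
  induction x using TensorProduct.induction_on with
  | zero => simp
  | tmul y m => simp [smul_tmul']
  | add x y hx hy => simp only [smul_add, map_add, hx, hy]

theorem smul_eq_rTensor_mulLeft (a : A) (x : A ⊗[K] M) :
    a • x = (LinearMap.mulLeft K a).rTensor M x := by
  induction x using TensorProduct.induction_on with
  | zero => simp
  | tmul y m => simp [smul_tmul']
  | add x y hx hy => simp only [smul_add, map_add, hx, hy]

namespace NCT

section Left

variable (P : Type) [AddCommGroup P] [Module A P] [Module K P] [IsScalarTower K A P]

def cancelBaseChangeLeft : NCT A (A ⊗[K] M) P ≃+ P ⊗[K] M :=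
  AddMonoidHom.toAddEquiv
    (lift (fun x p => (orbitMap K p).rTensor M x)
      (fun x x' p => map_add _ x x')
      (fun x p p' => by rw [orbitMap_add, LinearMap.rTensor_add, LinearMap.add_apply])
      (fun a x p => by
        rw [op_smul_eq_rTensor_mulRight, ← LinearMap.rTensor_comp_apply, orbitMap_smul]))
    (liftAddHom
      (AddMonoidHom.mk₂ (fun p m => tmul A ((1 : A) ⊗ₜ[K] m) p)
        (fun p p' m => tmul_add_right _ _ _)
        (fun p m m' => by rw [TensorProduct.tmul_add, tmul_add_left]))
      (fun k p m => by
        simp only [AddMonoidHom.mk₂_apply]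
        rw [TensorProduct.tmul_smul, smul_tmul]))
    (addMonoidHom_ext fun x p => by
      induction x using TensorProduct.induction_on with
      | zero => simp
      | tmul a m =>
        simp only [AddMonoidHom.comp_apply, lift_tmul, LinearMap.rTensor_tmul, orbitMap_apply,
          liftAddHom_tmul, AddMonoidHom.mk₂_apply, AddMonoidHom.id_apply]
        rw [← op_smul_tmul, smul_tmul', op_smul_eq_mul, one_mul]
      | add x y hx hy => simp only [tmul_add_left, map_add, hx, hy])
    (AddMonoidHom.ext fun t => by
      induction t using TensorProduct.induction_on with
      | zero => simp
      | tmul p m => simp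
      | add x y hx hy => simp_all)

theorem cancelBaseChangeLeft_mapRight {P' : Type} [AddCommGroup P'] [Module A P'] [Module K P']
    [IsScalarTower K A P'] (g : P →ₗ[K] P') (hg : ∀ (a : A) (p : P), g (a • p) = a • g p)
    (z : NCT A (A ⊗[K] M) P) :
    cancelBaseChangeLeft K A M P' (mapRight A (A ⊗[K] M) g.toAddMonoidHom hg z) =
      g.rTensor M (cancelBaseChangeLeft K A M P z) := by
  induction z using induction_on with
  | zero => simp
  | tmul x p =>
    change (orbitMap K (g p)).rTensor M x = g.rTensor M ((orbitMap K p).rTensor M x)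
    rw [← LinearMap.rTensor_comp_apply, comp_orbitMap g hg]
  | add x y hx hy => simp only [map_add, hx, hy]

end Left

section Right

variable (P : Type) [AddCommGroup P] [Module Aᵐᵒᵖ P] [Module K P] [IsScalarTower K Aᵐᵒᵖ P]

def cancelBaseChangeRight : NCT A P (A ⊗[K] M) ≃+ P ⊗[K] M :=
  AddMonoidHom.toAddEquiv
    (lift (fun p x => (opOrbitMap K p).rTensor M x)
      (fun p p' x => by rw [opOrbitMap_add, LinearMap.rTensor_add, LinearMap.add_apply])
      (fun p x x' => map_add _ x x')
      (fun a p x => by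
        rw [smul_eq_rTensor_mulLeft, ← LinearMap.rTensor_comp_apply, opOrbitMap_op_smul]))
    (liftAddHom
      (AddMonoidHom.mk₂ (fun p m => tmul A p ((1 : A) ⊗ₜ[K] m))
        (fun p p' m => tmul_add_left _ _ _)
        (fun p m m' => by rw [TensorProduct.tmul_add, tmul_add_right]))
      (fun k p m => by
        simp only [AddMonoidHom.mk₂_apply]
        rw [TensorProduct.tmul_smul, smul_tmul]))
    (addMonoidHom_ext fun p x => by
      induction x using TensorProduct.induction_on with
      | zero => simp
      | tmul a m =>
        simp only [AddMonoidHom.comp_apply, lift_tmul, LinearMap.rTensor_tmul, opOrbitMap_apply,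
          liftAddHom_tmul, AddMonoidHom.mk₂_apply, AddMonoidHom.id_apply]
        rw [op_smul_tmul, smul_tmul', smul_eq_mul, mul_one]
      | add x y hx hy => simp only [tmul_add_right, map_add, hx, hy])
    (AddMonoidHom.ext fun t => by
      induction t using TensorProduct.induction_on with
      | zero => simp
      | tmul p m => simp
      | add x y hx hy => simp_all)

theorem cancelBaseChangeRight_mapLeft {P' : Type} [AddCommGroup P'] [Module Aᵐᵒᵖ P']
    [Module K P'] [IsScalarTower K Aᵐᵒᵖ P'] (f : P →ₗ[K] P')
    (hf : ∀ (a : Aᵐᵒᵖ) (p : P), f (a • p) = a • f p) (z : NCT A P (A ⊗[K] M)) :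
    cancelBaseChangeRight K A M P' (mapLeft A (A ⊗[K] M) f.toAddMonoidHom hf z) =
      f.rTensor M (cancelBaseChangeRight K A M P z) := by
  induction z using induction_on with
  | zero => simp
  | tmul p x =>
    change (opOrbitMap K (f p)).rTensor M x = f.rTensor M ((opOrbitMap K p).rTensor M x)
    rw [← LinearMap.rTensor_comp_apply, comp_opOrbitMap f hf]
  | add x y hx hy => simp only [map_add, hx, hy]

end Right

end NCT

end CancelBaseChange

section Purity

open NCT

variable {K A B : Type} [CommRing K] [Ring A] [Algebra K A] [Ring B] [Algebra K B]

theorem AlgHom.isScalarTower_compHom (i : A →ₐ[K] B) :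
    letI := Module.compHom B i.toRingHom
    IsScalarTower K A B :=
  letI := Module.compHom B i.toRingHom
  ⟨fun k a b => show i (k • a) * b = k • (i a * b) by rw [map_smul, smul_mul_assoc]⟩

theorem AlgHom.isScalarTower_op_compHom (i : A →ₐ[K] B) :
    letI := Module.compHom B (RingHom.op i.toRingHom)
    IsScalarTower K Aᵐᵒᵖ B :=
  letI := Module.compHom B (RingHom.op i.toRingHom)
  ⟨fun k a b => show b * i (k • a).unop = k • (b * i a.unop) by
    rw [unop_smul, map_smul, mul_smul_comm]⟩

theorem AlgHom.isPure_of_leftPure (i : A →ₐ[K] B) (h : i.toRingHom.LeftPure) :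
    i.toLinearMap.IsPure := by
  intro M _ _
  let : Module A B := Module.compHom B i.toRingHom
  have := i.isScalarTower_compHom
  have hi : ∀ (a a' : A), i (a • a') = a • i a' := map_mul i
  have hnat : i.toLinearMap.rTensor M = cancelBaseChangeLeft K A M B ∘
      mapRight A (A ⊗[K] M) i.toLinearMap.toAddMonoidHom hi ∘
        (cancelBaseChangeLeft K A M A).symm := by
    funext x
    conv_lhs => rw [← (cancelBaseChangeLeft K A M A).apply_symm_apply x]
    exact (cancelBaseChangeLeft_mapRight K A M A i.toLinearMap hi _).symm
  rw [hnat]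
  exact (cancelBaseChangeLeft K A M B).injective.comp
    ((h _ _ _).comp (cancelBaseChangeLeft K A M A).symm.injective)

theorem AlgHom.isPure_of_rightPure (i : A →ₐ[K] B) (h : i.toRingHom.RightPure) :
    i.toLinearMap.IsPure := by
  intro M _ _
  let : Module Aᵐᵒᵖ B := Module.compHom B (RingHom.op i.toRingHom)
  have := i.isScalarTower_op_compHom
  have hi : ∀ (a : Aᵐᵒᵖ) (a' : A), i (a • a') = a • i a' := fun a a' => map_mul i a' a.unop
  have hnat : i.toLinearMap.rTensor M = cancelBaseChangeRight K A M B ∘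
      mapLeft A (A ⊗[K] M) i.toLinearMap.toAddMonoidHom hi ∘
        (cancelBaseChangeRight K A M A).symm := by
    funext x
    conv_lhs => rw [← (cancelBaseChangeRight K A M A).apply_symm_apply x]
    exact (cancelBaseChangeRight_mapLeft K A M A i.toLinearMap hi _).symm
  rw [hnat]
  exact (cancelBaseChangeRight K A M B).injective.comp
    ((h _ _ _).comp (cancelBaseChangeRight K A M A).symm.injective)

theorem AlgHom.leftPure_of_isPure (hA : IsSeparableAlgebra K A) (i : A →ₐ[K] B)
    (h : i.toLinearMap.IsPure) : i.toRingHom.LeftPure := by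
  intro L _ _
  let : Module K L := Module.compHom L (algebraMap K Aᵐᵒᵖ)
  have : IsScalarTower K Aᵐᵒᵖ L := .of_algebraMap_smul fun _ _ => rfl
  let : Module A B := Module.compHom B i.toRingHom
  have := i.isScalarTower_compHom
  exact mapRight_injective_of_isSeparable hA i.toLinearMap (map_mul i) (h.lTensor_injective L)

theorem AlgHom.rightPure_of_isPure (hA : IsSeparableAlgebra K A) (i : A →ₐ[K] B)
    (h : i.toLinearMap.IsPure) : i.toRingHom.RightPure := by
  intro M _ _
  let : Module K M := Module.compHom M (algebraMap K A)
  have : IsScalarTower K A M := .of_algebraMap_smul fun _ _ => rfl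
  let : Module Aᵐᵒᵖ B := Module.compHom B (RingHom.op i.toRingHom)
  have := i.isScalarTower_op_compHom
  exact mapLeft_injective_of_isSeparable hA i.toLinearMap (fun a a' => map_mul i a' a.unop) (h M)

end Purity

end

/-- Let `K` be a commutative ring, `A` a separable `K`-algebra, and
`i : A → B` a homomorphism of `K`-algebras.  Then `i` is a pure morphism of left
`A`-modules if and only if it is a pure morphism of right `A`-modules. -/
theorem stmt9 {K A B : Type} [CommRing K] [Ring A] [Algebra K A] [Ring B] [Algebra K B]
    (hA : IsSeparableAlgebra K A) (i : A →ₐ[K] B) :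
    i.toRingHom.LeftPure ↔ i.toRingHom.RightPure :=
  ⟨fun h => i.rightPure_of_isPure hA (i.isPure_of_leftPure h),
    fun h => i.leftPure_of_isPure hA (i.isPure_of_rightPure h)⟩
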